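/- arXiv:2311.06277 — 2 statements merged into one kernel-verified Lean document; each statement's English description precedes it below -/
import Mathlib

section
/- Let ω ∈ 𝓑'₀ have power series expansion ω(z) = c₁z + c₂z² + c₃z³ + ⋯ on 𝔻, and suppose 0 ≤ |c₁| ≤ 4/7. Then |c₃ − c₁c₂| ≤ (1/48)·(1 + |c₁|)·(9|c₁|² − 16|c₁| + 16). -/
/-!
The derivative `φ = ω'` maps the disc into the closed disc, with `φ 0 = c₁`, `φ' 0 = 2 c₂` and
`φ'' 0 / 2 = 3 c₃`. If `|c₁| < 1`, composing `φ` with the disc automorphism sending `c₁` to `0`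
and dividing by `z` gives again a self-map `χ` of the disc, and the Schwarz–Pick inequality
`|χ' 0| ≤ 1 - |χ 0|²` becomes `|(1 - |c₁|²) 3c₃ + c̄₁ (2c₂)²| ≤ (1 - |c₁|²)² - |2c₂|²`.
Isolating `c₃ - c₁c₂` with the triangle inequality leaves a concave quadratic in `|2c₂|`,
whose maximum is the bound. If `|c₁| = 1`, `φ` is constant by the maximum principle.
-/

open Complex Metric ComplexConjugate Filter Topology Set
open scoped NNReal ENNReal

noncomputable def mobius (a w : ℂ) : ℂ := (w - a) / (1 - conj a * w)

theorem normSq_one_sub_conj_mul_sub_normSq_sub (a w : ℂ) :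
    normSq (1 - conj a * w) - normSq (w - a) = (1 - normSq a) * (1 - normSq w) := by
  simp only [normSq_apply, sub_re, sub_im, mul_re, mul_im, one_re, one_im, conj_re, conj_im]
  ring

theorem one_sub_conj_mul_ne_zero {a w : ℂ} (ha : ‖a‖ < 1) (hw : ‖w‖ ≤ 1) :
    1 - conj a * w ≠ 0 := by
  refine sub_ne_zero.2 fun h => ?_
  have : ‖conj a * w‖ < 1 := by
    rw [norm_mul, norm_conj]
    nlinarith [norm_nonneg a, norm_nonneg w]
  simp [← h] at this

theorem one_sub_conj_mul_self (a : ℂ) : 1 - conj a * a = ((1 - ‖a‖ ^ 2 : ℝ) : ℂ) := by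
  push_cast [conj_mul']
  rfl

theorem norm_mobius_le_one {a w : ℂ} (ha : ‖a‖ < 1) (hw : ‖w‖ ≤ 1) : ‖mobius a w‖ ≤ 1 := by
  have hden := one_sub_conj_mul_ne_zero ha hw
  rw [mobius, norm_div, div_le_one (norm_pos_iff.2 hden),
    ← sq_le_sq₀ (norm_nonneg _) (norm_nonneg _), Complex.sq_norm, Complex.sq_norm, ← sub_nonneg,
    normSq_one_sub_conj_mul_sub_normSq_sub, ← Complex.sq_norm, ← Complex.sq_norm]
  have := pow_le_one₀ (norm_nonneg w) hw (n := 2)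
  have := pow_lt_one₀ (norm_nonneg a) ha two_ne_zero
  nlinarith

@[simp] theorem mobius_self (a : ℂ) : mobius a a = 0 := by simp [mobius]

section
variable {𝕜 E : Type*} [NontriviallyNormedField 𝕜] [NormedAddCommGroup E] [NormedSpace 𝕜 E]

theorem dslope_sub_smul_of_continuousAt {h : 𝕜 → E} {c : 𝕜} (hc : ContinuousAt h c) :
    dslope (fun z => (z - c) • h z) c = h := by
  have hslope : ∀ z ≠ c, slope (fun z => (z - c) • h z) c z = h z := fun z hz => by
    rw [slope_def_module, sub_self, zero_smul, sub_zero, smul_smul,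
      inv_mul_cancel₀ (sub_ne_zero.2 hz), one_smul]
  funext z
  rcases eq_or_ne z c with rfl | hz
  · rw [dslope_same]
    refine (hasDerivAt_iff_tendsto_slope.2 ?_).deriv
    exact (hc.tendsto.mono_left nhdsWithin_le_nhds).congr'
      (eventually_nhdsWithin_of_forall fun w hw => (hslope w hw).symm)
  · rw [dslope_of_ne _ hz, hslope z hz]

theorem deriv_dslope_eq_zero_of_eventuallyEq_const {f : 𝕜 → E} {c : 𝕜}
    (h : f =ᶠ[𝓝 c] fun _ => f c) : deriv (dslope f c) c = 0 := by
  have : dslope f c =ᶠ[𝓝 c] fun _ => 0 := by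
    filter_upwards [h] with z hz
    rcases eq_or_ne z c with rfl | hne
    · simp [dslope_same, h.deriv_eq]
    · simp [dslope_of_ne _ hne, slope_def_module, hz]
  simp [this.deriv_eq]
end

-- The left side is a concave quadratic in `t`, maximal at `t = 3b(1 + b)/4`.
theorem schur_quadratic_le {b : ℝ} (hb0 : 0 ≤ b) (hb1 : b < 1) (t : ℝ) :
    ((1 - b ^ 2) ^ 2 - t ^ 2) / (3 * (1 - b ^ 2)) + b * t ^ 2 / (3 * (1 - b ^ 2)) + b * t / 2
      ≤ 1 / 48 * (1 + b) * (9 * b ^ 2 - 16 * b + 16) := by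
  have hs : 0 < 1 - b ^ 2 := by nlinarith
  have hgap : 1 / 48 * (1 + b) * (9 * b ^ 2 - 16 * b + 16)
      - (((1 - b ^ 2) ^ 2 - t ^ 2) / (3 * (1 - b ^ 2)) + b * t ^ 2 / (3 * (1 - b ^ 2)) + b * t / 2)
      = (1 - b) * (3 * b * (1 + b) - 4 * t) ^ 2 / (48 * (1 - b ^ 2)) := by
    field_simp
    ring
  have : 0 ≤ (1 - b) * (3 * b * (1 + b) - 4 * t) ^ 2 / (48 * (1 - b ^ 2)) := by
    have : 0 ≤ 1 - b := by linarith
    positivity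
  linarith

section SelfMapsOfDisc

variable {f : ℂ → ℂ}

theorem eventuallyEq_const_of_norm_eq_one (hd : DifferentiableOn ℂ f (ball 0 1))
    (hf : MapsTo f (ball 0 1) (closedBall 0 1)) (h : ‖f 0‖ = 1) : f =ᶠ[𝓝 0] fun _ => f 0 := by
  refine Complex.eventually_eq_of_isLocalMax_norm
    (hd.eventually_differentiableAt (ball_mem_nhds 0 one_pos)) ?_
  filter_upwards [ball_mem_nhds (0 : ℂ) one_pos] with z hz
  simpa [h] using hf hz

theorem dslope_mobius_comp (hf : DifferentiableAt ℂ f 0) (ha : ‖f 0‖ < 1) :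
    dslope (fun z => mobius (f 0) (f z)) 0 = fun z => dslope f 0 z / (1 - conj (f 0) * f z) := by
  have hfactor : (fun z => mobius (f 0) (f z))
      = fun z => (z - 0) • (dslope f 0 z / (1 - conj (f 0) * f z)) := by
    funext z
    rw [mobius, ← sub_smul_dslope f 0 z, smul_eq_mul, smul_eq_mul, mul_div_assoc]
  rw [hfactor]
  exact dslope_sub_smul_of_continuousAt <| (continuousAt_dslope_same.2 hf).div
    (continuousAt_const.sub (continuousAt_const.mul hf.continuousAt))
    (one_sub_conj_mul_ne_zero ha ha.le)

theorem norm_dslope_div_one_sub_conj_mul_le_one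
    (hd : DifferentiableOn ℂ f (ball 0 1)) (hf : MapsTo f (ball 0 1) (closedBall 0 1))
    (ha : ‖f 0‖ < 1) {z : ℂ} (hz : z ∈ ball (0 : ℂ) 1) :
    ‖dslope f 0 z / (1 - conj (f 0) * f z)‖ ≤ 1 := by
  have hfz : ∀ z ∈ ball (0 : ℂ) 1, ‖f z‖ ≤ 1 := fun z hz => mem_closedBall_zero_iff.1 (hf hz)
  have hψd : DifferentiableOn ℂ (fun z => mobius (f 0) (f z)) (ball 0 1) :=
    (hd.sub_const _).div ((differentiableOn_const _).sub ((differentiableOn_const _).mul hd))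
      fun z hz => one_sub_conj_mul_ne_zero ha (hfz z hz)
  have hψ : MapsTo (fun z => mobius (f 0) (f z)) (ball 0 1) (closedBall (mobius (f 0) (f 0)) 1) :=
    fun z hz => by simpa using norm_mobius_le_one ha (hfz z hz)
  have := Complex.norm_dslope_le_div_of_mapsTo_ball hψd hψ hz
  rw [dslope_mobius_comp (hd.differentiableAt (ball_mem_nhds 0 one_pos)) ha, div_one] at this
  exact this

theorem norm_deriv_le_one_sub_sq
    (hd : DifferentiableOn ℂ f (ball 0 1)) (hf : MapsTo f (ball 0 1) (closedBall 0 1)) :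
    ‖deriv f 0‖ ≤ 1 - ‖f 0‖ ^ 2 := by
  have h0 : (0 : ℂ) ∈ ball (0 : ℂ) 1 := mem_ball_self one_pos
  rcases (mem_closedBall_zero_iff.1 (hf h0)).lt_or_eq with ha | ha
  · have hs : 0 < 1 - ‖f 0‖ ^ 2 := by nlinarith [norm_nonneg (f 0)]
    have := norm_dslope_div_one_sub_conj_mul_le_one hd hf ha h0
    rwa [dslope_same, one_sub_conj_mul_self, norm_div, norm_real, Real.norm_of_nonneg hs.le,
      div_le_one hs] at this
  · simp [(eventuallyEq_const_of_norm_eq_one hd hf ha).deriv_eq, ha]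

theorem norm_one_sub_sq_mul_deriv_dslope_add_le
    (hd : DifferentiableOn ℂ f (ball 0 1)) (hf : MapsTo f (ball 0 1) (closedBall 0 1))
    (ha : ‖f 0‖ < 1) :
    ‖(1 - ‖f 0‖ ^ 2 : ℝ) * deriv (dslope f 0) 0 + conj (f 0) * deriv f 0 ^ 2‖
      ≤ (1 - ‖f 0‖ ^ 2) ^ 2 - ‖deriv f 0‖ ^ 2 := by
  set s : ℝ := 1 - ‖f 0‖ ^ 2
  have hs : 0 < s := by nlinarith [norm_nonneg (f 0)]
  have hball : ball (0 : ℂ) 1 ∈ 𝓝 0 := ball_mem_nhds 0 one_pos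
  have hgd : DifferentiableOn ℂ (dslope f 0) (ball 0 1) := (differentiableOn_dslope hball).2 hd
  have hden : ∀ z ∈ ball (0 : ℂ) 1, 1 - conj (f 0) * f z ≠ 0 := fun z hz =>
    one_sub_conj_mul_ne_zero ha (mem_closedBall_zero_iff.1 (hf hz))
  set χ := fun z => dslope f 0 z / (1 - conj (f 0) * f z)
  have hχd : DifferentiableOn ℂ χ (ball 0 1) :=
    hgd.div ((differentiableOn_const _).sub ((differentiableOn_const _).mul hd)) hden
  have hχ : MapsTo χ (ball 0 1) (closedBall 0 1) := fun z hz =>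
    mem_closedBall_zero_iff.2 (norm_dslope_div_one_sub_conj_mul_le_one hd hf ha hz)
  have hχ0 : χ 0 = deriv f 0 / s := by
    simp only [χ, dslope_same, one_sub_conj_mul_self, s]
  have hχ'0 :
      deriv χ 0 = ((s : ℂ) * deriv (dslope f 0) 0 + conj (f 0) * deriv f 0 ^ 2) / s ^ 2 := by
    have hder : HasDerivAt χ ((deriv (dslope f 0) 0 * (1 - conj (f 0) * f 0)
        - dslope f 0 0 * (0 - conj (f 0) * deriv f 0)) / (1 - conj (f 0) * f 0) ^ 2) 0 :=
      ((hgd.differentiableAt hball).hasDerivAt).div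
        ((hasDerivAt_const 0 (1 : ℂ)).sub
          ((hd.differentiableAt hball).hasDerivAt.const_mul (conj (f 0))))
        (hden 0 (mem_of_mem_nhds hball))
    rw [hder.deriv, dslope_same, one_sub_conj_mul_self]
    ring
  -- Schwarz–Pick for `χ = (mobius (f 0) ∘ f) / z`, multiplied through by `s ^ 2`
  have key := norm_deriv_le_one_sub_sq hχd hχ
  rw [hχ0, hχ'0, norm_div, norm_div, norm_pow, norm_real, Real.norm_of_nonneg hs.le,
    div_le_iff₀ (by positivity)] at key
  calc _ ≤ (1 - (‖deriv f 0‖ / s) ^ 2) * s ^ 2 := key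
    _ = s ^ 2 - ‖deriv f 0‖ ^ 2 := by field_simp

theorem norm_deriv_dslope_div_three_sub_le
    (hd : DifferentiableOn ℂ f (ball 0 1)) (hf : MapsTo f (ball 0 1) (closedBall 0 1)) :
    ‖deriv (dslope f 0) 0 / 3 - f 0 * deriv f 0 / 2‖
      ≤ 1 / 48 * (1 + ‖f 0‖) * (9 * ‖f 0‖ ^ 2 - 16 * ‖f 0‖ + 16) := by
  rcases (mem_closedBall_zero_iff.1 (hf (mem_ball_self one_pos))).lt_or_eq with ha | ha
  · set s : ℝ := 1 - ‖f 0‖ ^ 2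
    have hs : 0 < s := by nlinarith [norm_nonneg (f 0)]
    have hs' : (s : ℂ) ≠ 0 := ofReal_ne_zero.2 hs.ne'
    set X := (s : ℂ) * deriv (dslope f 0) 0 + conj (f 0) * deriv f 0 ^ 2
    have hsplit : deriv (dslope f 0) 0 / 3 - f 0 * deriv f 0 / 2
        = X / (3 * s) - conj (f 0) * deriv f 0 ^ 2 / (3 * s) - f 0 * deriv f 0 / 2 := by
      simp only [X]
      field_simp
      ring
    have hnorm : ∀ z : ℂ, ‖z / (3 * s)‖ = ‖z‖ / (3 * s) := fun z => by
      rw [norm_div, norm_mul, norm_real, Real.norm_of_nonneg hs.le, RCLike.norm_ofNat]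
    calc _ ≤ ‖X / (3 * s)‖ + ‖conj (f 0) * deriv f 0 ^ 2 / (3 * s)‖ + ‖f 0 * deriv f 0 / 2‖ := by
          rw [hsplit]
          exact (norm_sub_le _ _).trans (add_le_add_left (norm_sub_le _ _) _)
      _ = ‖X‖ / (3 * s) + ‖f 0‖ * ‖deriv f 0‖ ^ 2 / (3 * s) + ‖f 0‖ * ‖deriv f 0‖ / 2 := by
          simp only [hnorm, norm_mul, norm_pow, norm_conj, norm_div, RCLike.norm_ofNat]
      _ ≤ (s ^ 2 - ‖deriv f 0‖ ^ 2) / (3 * s) + ‖f 0‖ * ‖deriv f 0‖ ^ 2 / (3 * s)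
            + ‖f 0‖ * ‖deriv f 0‖ / 2 := by
          gcongr
          exact norm_one_sub_sq_mul_deriv_dslope_add_le hd hf ha
      _ ≤ _ := schur_quadratic_le (norm_nonneg _) ha _
  · have hconst := eventuallyEq_const_of_norm_eq_one hd hf ha
    rw [hconst.deriv_eq, deriv_const, deriv_dslope_eq_zero_of_eventuallyEq_const hconst, ha]
    norm_num

end SelfMapsOfDisc

theorem hasFPowerSeriesOnBall_ofScalars_of_hasSum {f : ℂ → ℂ} {a : ℕ → ℂ} {r : ℝ≥0} (hr : 0 < r)
    (h : ∀ z ∈ ball (0 : ℂ) r, HasSum (fun n => a n * z ^ n) (f z)) :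
    HasFPowerSeriesOnBall f (FormalMultilinearSeries.ofScalars ℂ a) 0 r where
  r_le := by
    refine ENNReal.le_of_forall_nnreal_lt fun ρ hρ => ?_
    have hρ' : ((ρ : ℝ) : ℂ) ∈ ball (0 : ℂ) r := by
      simpa [abs_of_nonneg ρ.2] using hρ
    refine FormalMultilinearSeries.le_radius_of_tendsto _ (l := 0) ?_
    simpa [FormalMultilinearSeries.ofScalars_norm, abs_of_nonneg ρ.2] using
      (h _ hρ').summable.tendsto_atTop_zero.norm
  r_pos := by simpa using hr
  hasSum {y} hy := by
    rw [Metric.eball_coe] at hy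
    simpa [FormalMultilinearSeries.ofScalars_apply_eq, mul_comm] using h y hy

theorem HasFPowerSeriesOnBall.hasFPowerSeriesOnBall_deriv {f : ℂ → ℂ}
    {p : FormalMultilinearSeries ℂ ℂ ℂ} {r : ℝ≥0∞} (h : HasFPowerSeriesOnBall f p 0 r) :
    HasFPowerSeriesOnBall (deriv f)
      ((ContinuousLinearMap.apply ℂ ℂ (1 : ℂ)).compFormalMultilinearSeries p.derivSeries) 0 r := by
  have : (ContinuousLinearMap.apply ℂ ℂ (1 : ℂ)) ∘ fderiv ℂ f = deriv f := by
    ext z; simp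
  simpa [this] using (ContinuousLinearMap.apply ℂ ℂ (1 : ℂ)).comp_hasFPowerSeriesOnBall h.fderiv

theorem FormalMultilinearSeries.coeff_apply_one_comp_derivSeries
    (p : FormalMultilinearSeries ℂ ℂ ℂ) (n : ℕ) :
    ((ContinuousLinearMap.apply ℂ ℂ (1 : ℂ)).compFormalMultilinearSeries p.derivSeries).coeff n
      = (n + 1) * p.coeff (n + 1) := by
  have := p.derivSeries_coeff_one n
  simp only [nsmul_eq_mul, Nat.cast_add, Nat.cast_one] at this
  exact this

section
variable {𝕜 E : Type*} [NontriviallyNormedField 𝕜] [NormedAddCommGroup E] [NormedSpace 𝕜 E]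
  {f : 𝕜 → E} {p : FormalMultilinearSeries 𝕜 𝕜 E} {c : 𝕜}

theorem HasFPowerSeriesAt.deriv_eq_coeff_one (h : HasFPowerSeriesAt f p c) :
    deriv f c = p.coeff 1 :=
  h.deriv

theorem HasFPowerSeriesAt.deriv_dslope_eq_coeff_two (h : HasFPowerSeriesAt f p c) :
    deriv (dslope f c) c = p.coeff 2 := by
  rw [h.has_fpower_series_dslope_fslope.deriv_eq_coeff_one, FormalMultilinearSeries.coeff_fslope]
end

theorem stmt_5_general (ω : ℂ → ℂ) (c : ℕ → ℂ)
    (hb : ∀ z ∈ ball (0:ℂ) 1, ‖deriv ω z‖ ≤ 1)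
    (hc : ∀ z ∈ ball (0:ℂ) 1, HasSum (fun n : ℕ => c (n + 1) * z ^ (n + 1)) (ω z)) :
    ‖c 3 - c 1 * c 2‖ ≤ (1/48) * (1 + ‖c 1‖) * (9 * ‖c 1‖^2 - 16 * ‖c 1‖ + 16) := by
  have hω : HasFPowerSeriesOnBall (fun z => ω z + c 0) (.ofScalars ℂ c) 0 (1 : ℝ≥0) :=
    hasFPowerSeriesOnBall_ofScalars_of_hasSum one_pos fun z hz => by
      simpa using (hasSum_nat_add_iff (f := fun n => c n * z ^ n) 1).1 (hc z hz)
  have hφ := hω.hasFPowerSeriesOnBall_deriv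
  rw [deriv_add_const'] at hφ
  have h1 : deriv ω 0 = c 1 := by
    have := (hφ.hasFPowerSeriesAt.coeff_zero 1).symm
    simpa [FormalMultilinearSeries.coeff_apply_one_comp_derivSeries] using this
  have h2 : deriv (deriv ω) 0 = 2 * c 2 := by
    rw [hφ.hasFPowerSeriesAt.deriv_eq_coeff_one,
      FormalMultilinearSeries.coeff_apply_one_comp_derivSeries]
    norm_num
  have h3 : deriv (dslope (deriv ω) 0) 0 = 3 * c 3 := by
    rw [hφ.hasFPowerSeriesAt.deriv_dslope_eq_coeff_two,
      FormalMultilinearSeries.coeff_apply_one_comp_derivSeries]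
    norm_num
  have hφd : DifferentiableOn ℂ (deriv ω) (ball 0 1) := by
    simpa only [Metric.eball_coe, NNReal.coe_one] using hφ.differentiableOn
  have key := norm_deriv_dslope_div_three_sub_le hφd
    fun z hz => mem_closedBall_zero_iff.2 (hb z hz)
  rw [h1, h2, h3] at key
  convert key using 2
  ring

theorem stmt_5 (ω : ℂ → ℂ) (c : ℕ → ℂ)
    (hd : DifferentiableOn ℂ ω (ball 0 1))
    (h0 : ω 0 = 0)
    (hb : ∀ z ∈ ball (0:ℂ) 1, ‖deriv ω z‖ ≤ 1)
    (hc : ∀ z ∈ ball (0:ℂ) 1, HasSum (fun n : ℕ => c (n + 1) * z ^ (n + 1)) (ω z))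
    (h1 : ‖c 1‖ ≤ 4/7) :
    ‖c 3 - c 1 * c 2‖ ≤ (1/48) * (1 + ‖c 1‖) * (9 * ‖c 1‖^2 - 16 * ‖c 1‖ + 16) :=
  stmt_5_general ω c hb hc
end

section
/- Fix t with 0 ≤ t ≤ 1 and define ω(z) = ∫₀^z (t + w³)/(1 + tw³) dw for z ∈ 𝔻. Then ω ∈ 𝓑'₀, its power series coefficients satisfy c₁ = t, c₂ = c₃ = 0, c₄ = (1/4)(1 − t²), and equality |c₄ − c₂²| = (1/4)·(1 − t²) holds, so the bound |c₄ − c₂²| ≤ (1/4)(1 − |c₁|²) is sharp. -/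
/-!
Since the ball is convex, `g w = (t + w³) / (1 + t w³)` has a primitive `F` on it, and the
segment integral `∫₀¹ g (s z) z ds` equals `F z - F 0`; hence `ω' = g`. For real `|t| ≤ 1`, the
map `u ↦ (t + u) / (1 + t u)` sends the unit disc into its closure, so `|ω'| ≤ 1`. Expanding it as a geometric
series in `u = w³` and integrating term by term gives the coefficients
`c₁ = t`, `c_{3k+4} = (1 - t²) (-t)^k / (3k + 4)`, all others zero.
-/

open Complex Metric

theorem one_add_ne_zero_of_norm_lt_one {R : Type*} [SeminormedRing R] [NormOneClass R] {u : R}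
    (h : ‖u‖ < 1) : 1 + u ≠ 0 := by
  intro h0
  rw [eq_neg_of_add_eq_zero_right h0, norm_neg, norm_one] at h
  exact lt_irrefl 1 h

def mobiusCoeff (t : ℂ) : ℕ → ℂ
  | 0 => t
  | k + 1 => (1 - t ^ 2) * (-t) ^ k

theorem hasSum_mobiusCoeff_mul_pow {t u : ℂ} (h : ‖t * u‖ < 1) :
    HasSum (fun k => mobiusCoeff t k * u ^ k) ((t + u) / (1 + t * u)) := by
  have hne := one_add_ne_zero_of_norm_lt_one h
  have htail : HasSum (fun k => mobiusCoeff t (k + 1) * u ^ (k + 1))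
      ((1 - t ^ 2) * u / (1 + t * u)) := by
    have hgeom := hasSum_geometric_of_norm_lt_one (ξ := -(t * u)) (by rwa [norm_neg])
    rw [div_eq_mul_inv, show 1 + t * u = 1 - -(t * u) by ring]
    refine (hgeom.mul_left ((1 - t ^ 2) * u)).congr_fun fun k => ?_
    rw [mobiusCoeff, neg_mul_eq_neg_mul, mul_pow]
    ring
  have hsplit : (t + u) / (1 + t * u)
      = mobiusCoeff t 0 * u ^ 0 + (1 - t ^ 2) * u / (1 + t * u) := by
    rw [mobiusCoeff]
    field_simp
    ring
  rw [hsplit]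
  exact HasSum.zero_add (f := fun k => mobiusCoeff t k * u ^ k) htail

theorem norm_mobiusCoeff_le_one {t : ℝ} (ht : |t| ≤ 1) (k : ℕ) : ‖mobiusCoeff t k‖ ≤ 1 := by
  cases k with
  | zero => simpa [mobiusCoeff] using ht
  | succ k =>
    have ht2 : t ^ 2 ≤ 1 := by
      rw [← sq_abs]
      exact pow_le_one₀ (abs_nonneg t) ht
    rw [mobiusCoeff, norm_mul, norm_pow, norm_neg, ← ofReal_pow, ← ofReal_one, ← ofReal_sub,
      norm_real, norm_real, Real.norm_of_nonneg (sub_nonneg.mpr ht2), Real.norm_eq_abs]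
    calc (1 - t ^ 2) * |t| ^ k ≤ 1 * 1 := by
          gcongr
          · nlinarith [sq_nonneg t]
          · exact pow_le_one₀ (abs_nonneg t) ht
      _ = 1 := one_mul 1

theorem norm_add_le_norm_one_add_mul {t : ℝ} (ht : |t| ≤ 1) {u : ℂ} (hu : ‖u‖ ≤ 1) :
    ‖(t : ℂ) + u‖ ≤ ‖1 + t * u‖ := by
  have ht2 : t ^ 2 ≤ 1 := by
    rw [← sq_abs]
    exact pow_le_one₀ (abs_nonneg t) ht
  have hu2 : u.re ^ 2 + u.im ^ 2 ≤ 1 := by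
    have := Complex.sq_norm u
    rw [normSq_apply] at this
    nlinarith [norm_nonneg u]
  rw [← sq_le_sq₀ (norm_nonneg _) (norm_nonneg _), Complex.sq_norm, Complex.sq_norm,
    normSq_apply, normSq_apply]
  simp only [add_re, add_im, ofReal_re, ofReal_im, one_re, one_im, mul_re, mul_im]
  -- |1 + t u|² - |t + u|² = (1 - t²)(1 - |u|²)
  nlinarith [mul_nonneg (sub_nonneg.mpr ht2) (sub_nonneg.mpr hu2)]

def spreadCoeff (m : ℕ) (b : ℕ → ℂ) (n : ℕ) : ℂ :=
  if m ∣ n then b (n / m) else 0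

theorem HasSum.spreadCoeff {m : ℕ} (hm : 0 < m) {b : ℕ → ℂ} {w s : ℂ}
    (h : HasSum (fun k => b k * (w ^ m) ^ k) s) :
    HasSum (fun n => spreadCoeff m b n * w ^ n) s := by
  have hinj : Function.Injective (fun k : ℕ => m * k) := fun _ _ => Nat.eq_of_mul_eq_mul_left hm
  rw [← hinj.hasSum_iff]
  · convert h using 2 with k
    simp [_root_.spreadCoeff, Nat.mul_div_cancel_left k hm, pow_mul]
  · intro n hn
    rw [_root_.spreadCoeff, if_neg (fun ⟨k, hk⟩ => hn ⟨k, hk.symm⟩), zero_mul]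

theorem norm_spreadCoeff_le {m : ℕ} {b : ℕ → ℂ} {C : ℝ} (hC : 0 ≤ C) (hb : ∀ k, ‖b k‖ ≤ C) (n : ℕ) :
    ‖spreadCoeff m b n‖ ≤ C := by
  unfold spreadCoeff
  split_ifs
  · exact hb _
  · simpa using hC

theorem hasDerivAt_integral_segment {f : ℂ → ℂ} {r : ℝ} (hf : DifferentiableOn ℂ f (ball 0 r))
    {z : ℂ} (hz : z ∈ ball 0 r) :
    HasDerivAt (fun z : ℂ => ∫ s in (0 : ℝ)..1, f (s * z) * z) (f z) z := by
  obtain ⟨F, hF0, hF⟩ := hf.isExactOn_ball.with_val_at 0 0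
  have hsegment : ∀ z ∈ ball (0 : ℂ) r, ∀ s ∈ Set.uIcc (0 : ℝ) 1, (s : ℂ) * z ∈ ball (0 : ℂ) r := by
    intro z hz s hs
    rw [Set.uIcc_of_le zero_le_one] at hs
    rw [mem_ball_zero_iff] at hz ⊢
    rw [norm_mul, norm_real, Real.norm_of_nonneg hs.1]
    nlinarith [norm_nonneg z, hs.2]
  have hprimitive : ∀ z ∈ ball (0 : ℂ) r, ∫ s in (0 : ℝ)..1, f (s * z) * z = F z := by
    intro z hz
    have hderiv : ∀ s ∈ Set.uIcc (0 : ℝ) 1,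
        HasDerivAt (fun s : ℝ => F (s * z)) (f (s * z) * z) s := by
      intro s hs
      have := (hF _ (hsegment z hz s hs)).comp (s : ℂ) ((hasDerivAt_id (s : ℂ)).mul_const z)
      simpa using this.comp_ofReal
    have hint : IntervalIntegrable (fun s : ℝ => f (s * z) * z) MeasureTheory.volume 0 1 := by
      refine ContinuousOn.intervalIntegrable (ContinuousOn.mul ?_ continuousOn_const)
      exact hf.continuousOn.comp (by fun_prop) (hsegment z hz)
    simpa [hF0] using intervalIntegral.integral_eq_sub_of_hasDerivAt hderiv hint
  exact (hF z hz).congr_of_eventuallyEq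
    (Filter.eventually_of_mem (isOpen_ball.mem_nhds hz) hprimitive)

theorem hasSum_integral_segment {f : ℂ → ℂ} {a : ℕ → ℂ} {z : ℂ}
    (ha : Summable fun n => ‖a n‖ * ‖z‖ ^ n)
    (hf : ∀ w ∈ closedBall (0 : ℂ) ‖z‖, HasSum (fun n => a n * w ^ n) (f w)) :
    HasSum (fun n => a n / (n + 1) * z ^ (n + 1)) (∫ s in (0 : ℝ)..1, f (s * z) * z) := by
  have hsegment : ∀ s ∈ Set.uIoc (0 : ℝ) 1, (s : ℂ) * z ∈ closedBall (0 : ℂ) ‖z‖ := by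
    intro s hs
    rw [Set.uIoc_of_le zero_le_one] at hs
    rw [mem_closedBall_zero_iff, norm_mul, norm_real, Real.norm_of_nonneg hs.1.le]
    nlinarith [norm_nonneg z, hs.2]
  have hterm : ∀ n : ℕ, ∫ s in (0 : ℝ)..1, a n * (s * z) ^ n * z = a n / (n + 1) * z ^ (n + 1) := by
    intro n
    calc ∫ s in (0 : ℝ)..1, a n * (s * z) ^ n * z
        = ∫ s in (0 : ℝ)..1, a n * z ^ (n + 1) * ((s ^ n : ℝ) : ℂ) := by
          congr 1; funext s; push_cast; ring
      _ = a n / (n + 1) * z ^ (n + 1) := by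
          rw [intervalIntegral.integral_const_mul, intervalIntegral.integral_ofReal, integral_pow]
          push_cast
          field_simp
          ring
  simp_rw [← hterm]
  refine intervalIntegral.hasSum_integral_of_dominated_convergence
    (fun n _ => ‖a n‖ * ‖z‖ ^ n * ‖z‖) (fun n => by fun_prop) (fun n => ?_)
    (Filter.Eventually.of_forall fun _ _ => ha.mul_right _) intervalIntegrable_const
    (Filter.Eventually.of_forall fun s hs => (hf _ (hsegment s hs)).mul_right z)
  refine Filter.Eventually.of_forall fun s hs => ?_
  have hsz := mem_closedBall_zero_iff.mp (hsegment s hs)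
  rw [norm_mul, norm_mul, norm_pow]
  gcongr

theorem stmt_17 (t : ℝ) (ht0 : 0 ≤ t) (ht1 : t ≤ 1)
    (ω : ℂ → ℂ)
    (hω : ω = fun z : ℂ =>
      ∫ s in (0:ℝ)..1, (((t : ℂ) + ((s : ℂ) * z)^3) / (1 + (t : ℂ) * ((s : ℂ) * z)^3)) * z) :
    DifferentiableOn ℂ ω (ball 0 1) ∧ ω 0 = 0 ∧
    (∀ z ∈ ball (0:ℂ) 1, ‖deriv ω z‖ ≤ 1) ∧
    ∃ c : ℕ → ℂ,
      (∀ z ∈ ball (0:ℂ) 1, HasSum (fun n : ℕ => c (n + 1) * z ^ (n + 1)) (ω z)) ∧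
      c 1 = (t : ℂ) ∧ c 2 = 0 ∧ c 3 = 0 ∧ c 4 = (1 - (t : ℂ)^2) / 4 ∧
      ‖c 4 - c 2^2‖ = (1/4) * (1 - t^2) := by
  have ht : |t| ≤ 1 := abs_le.mpr ⟨by linarith, ht1⟩
  set g : ℂ → ℂ := fun w => ((t : ℂ) + w ^ 3) / (1 + t * w ^ 3)
  have hmul_lt : ∀ w : ℂ, ‖w‖ < 1 → ‖(t : ℂ) * w ^ 3‖ < 1 := fun w hw => by
    rw [norm_mul, norm_pow, norm_real, Real.norm_eq_abs]
    exact mul_lt_one_of_nonneg_of_lt_one_right ht (by positivity)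
      (pow_lt_one₀ (norm_nonneg w) hw three_ne_zero)
  have hg_diff : DifferentiableOn ℂ g (ball 0 1) := DifferentiableOn.div (by fun_prop) (by fun_prop)
    fun w hw => one_add_ne_zero_of_norm_lt_one (hmul_lt w (mem_ball_zero_iff.mp hw))
  have hderiv : ∀ z ∈ ball (0 : ℂ) 1, HasDerivAt ω (g z) z := fun z hz =>
    hω ▸ hasDerivAt_integral_segment hg_diff hz
  set a := spreadCoeff 3 (mobiusCoeff t)
  have hc2 : a 1 / 2 = 0 := by simp [a, spreadCoeff]
  have hc4 : a 3 / 4 = (1 - (t : ℂ) ^ 2) / 4 := by simp [a, spreadCoeff, mobiusCoeff]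
  refine ⟨fun z hz => (hderiv z hz).differentiableAt.differentiableWithinAt, by simp [hω],
    fun z hz => ?_, fun n => a (n - 1) / n, fun z hz => ?_, by simp [a, spreadCoeff, mobiusCoeff],
    hc2, by simp [a, spreadCoeff], hc4, ?_⟩
  · have hz3 : ‖z ^ 3‖ ≤ 1 := by
      rw [norm_pow]
      exact pow_le_one₀ (norm_nonneg z) (mem_ball_zero_iff.mp hz).le
    rw [(hderiv z hz).deriv, norm_div]
    exact div_le_one_of_le₀ (norm_add_le_norm_one_add_mul ht hz3) (norm_nonneg _)
  · have hz1 := mem_ball_zero_iff.mp hz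
    have hseries : ∀ w ∈ closedBall (0 : ℂ) ‖z‖, HasSum (fun n => a n * w ^ n) (g w) :=
      fun w hw => (hasSum_mobiusCoeff_mul_pow
        (hmul_lt w ((mem_closedBall_zero_iff.mp hw).trans_lt hz1))).spreadCoeff three_pos
    have hsummable : Summable fun n => ‖a n‖ * ‖z‖ ^ n :=
      (summable_geometric_of_lt_one (norm_nonneg z) hz1).of_nonneg_of_le (fun n => by positivity)
        fun n => mul_le_of_le_one_left (by positivity)
          (norm_spreadCoeff_le zero_le_one (norm_mobiusCoeff_le_one ht) n)
    rw [hω]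
    refine (hasSum_integral_segment hsummable hseries).congr_fun fun n => ?_
    simp
  · have ht2 : 0 ≤ 1 - t ^ 2 := by nlinarith
    show ‖a 3 / 4 - (a 1 / 2) ^ 2‖ = _
    rw [hc4, hc2, ← ofReal_ofNat, ← ofReal_pow, ← ofReal_one, ← ofReal_sub, ← ofReal_div,
      zero_pow two_ne_zero, sub_zero, norm_real, Real.norm_of_nonneg (by positivity)]
    ring
end
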